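/- For every integer k ≥ 0 there exists a constant C > 0 such that for infinitely many integers n there exists an n-vertex ordered graph (G, ≺) ordered along a Hamiltonian path which is (2k+1)-non-crossing and contains no induced path of size greater than C · (log n)^{1/(k+1)}. -/

import Mathlib

/-- `(G, ≺)` (on `Fin n` with its natural order) is ordered along a Hamiltonian path:
consecutive vertices are adjacent. -/
def OrderedAlongHamPath {n : ℕ} (G : SimpleGraph (Fin n)) : Prop :=
  ∀ i : Fin n, ∀ h : (i : ℕ) + 1 < n, G.Adj i ⟨(i : ℕ) + 1, h⟩

/-- An induced path of size `s`: `s` distinct vertices, adjacent iff consecutive. -/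
def IsInducedPath {n : ℕ} (G : SimpleGraph (Fin n)) {s : ℕ} (v : Fin s → Fin n) : Prop :=
  Function.Injective v ∧
    ∀ i j : Fin s, G.Adj (v i) (v j) ↔ ((i : ℕ) + 1 = (j : ℕ) ∨ (j : ℕ) + 1 = (i : ℕ))

/-- An increasing induced path. -/
def IsIncreasingInducedPath {n : ℕ} (G : SimpleGraph (Fin n)) {s : ℕ} (v : Fin s → Fin n) : Prop :=
  StrictMono v ∧
    ∀ i j : Fin s, G.Adj (v i) (v j) ↔ ((i : ℕ) + 1 = (j : ℕ) ∨ (j : ℕ) + 1 = (i : ℕ))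

/-- A set of edges is non-crossing. -/
def NonCrossing {n : ℕ} (F : Set (Sym2 (Fin n))) : Prop :=
  ¬ ∃ a b c d : Fin n, a < c ∧ c < b ∧ b < d ∧ s(a, b) ∈ F ∧ s(c, d) ∈ F

/-- `(G, ≺)` is `k`-non-crossing: the edge set partitions into `k` non-crossing sets. -/
def KNonCrossing {n : ℕ} (G : SimpleGraph (Fin n)) (k : ℕ) : Prop :=
  ∃ E : Fin k → Set (Sym2 (Fin n)),
    (⋃ i, E i) = G.edgeSet ∧ (∀ i j, i ≠ j → Disjoint (E i) (E j)) ∧ ∀ i, NonCrossing (E i)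

/-- An interval of the ordering. -/
def IsInterval {n : ℕ} (I : Set (Fin n)) : Prop :=
  ∀ a ∈ I, ∀ b ∈ I, ∀ x : Fin n, a ≤ x → x ≤ b → x ∈ I

/-- The gap of `u` towards `I` is at least `g`. -/
def HasGapAtLeast {n : ℕ} (G : SimpleGraph (Fin n)) (u : Fin n) (I : Set (Fin n)) (g : ℕ) : Prop :=
  ∃ a b : Fin n, a ∈ I ∧ b ∈ I ∧ a ≤ b ∧ g ≤ (b : ℕ) - (a : ℕ) ∧
    ∀ x ∈ Set.Icc a b, ¬ G.Adj u x

/-- The edges of `F` crossing the cut just after position `t`. -/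
def CutAt {n : ℕ} (F : Set (Sym2 (Fin n))) (t : Fin n) : Set (Sym2 (Fin n)) :=
  {e | e ∈ F ∧ ∃ a b : Fin n, e = s(a, b) ∧ a ≤ t ∧ t < b}

/-- The set of edges `F` (on ordered vertex set `Fin n`) has cutwidth at most `c`. -/
def CutwidthLE {n : ℕ} (F : Set (Sym2 (Fin n))) (c : ℕ) : Prop :=
  ∀ t : Fin n, (CutAt F t).ncard ≤ c

/-!
Take H = h ^ (k + 1) and the vertices 0, …, 2 ^ H - 1. At a scale c ≤ k, with γ = h ^ c, a vertex z
divisible by 2 ^ ((j + 1) γ) is joined to every u ≠ z divisible by 2 ^ (j γ) with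
|z - u| < 2 ^ ((j + 1) γ). Consecutive integers are joined at scale 0, and the edges fall into
2k + 1 non-crossing classes: the scale-0 edges, which are dyadic intervals, and for each scale
c ≥ 1 the edges whose more divisible endpoint z is the left, resp. the right, end.

Let P be an induced path using scales ≤ c with vertices in (0, 2 ^ ((m + 1) γ)), and call the
multiples of 2 ^ (m γ) pillars. No edge jumps over a pillar, so a pillar-free P lies in one block
between consecutive pillars and is a translate of the case m - 1. Otherwise the pillars are
consecutive on P: two pillars separated only by non-pillars would be the two ends of one block,
hence adjacent. Before the first pillar z there are at most m vertices, because they lie in a block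
ending at z, so a multiple of 2 ^ ((m - 1) γ) among them is adjacent to z and must precede it
directly; recurse on m. Divided by 2 ^ (m γ), the pillars form an induced path in (0, 2 ^ γ).
Hence P has at most 2 (h - 1) c + 2 m + 1 vertices, and m + 1 = h at scale c is m = 0 at scale
c + 1. The vertex 0 splits a path into two such paths, so for n = 2 ^ H induced paths have
O(k h) = O(k (log n) ^ (1 / (k + 1))) vertices.
-/

lemma Nat.add_le_of_dvd_of_lt {D u w : ℕ} (hu : D ∣ u) (hw : D ∣ w) (h : u < w) : u + D ≤ w := by
  have := Nat.le_of_dvd (by omega) (Nat.dvd_sub hw hu)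
  omega

def ChainEdge (γ z u : ℕ) : Prop :=
  ∃ j, 2 ^ ((j + 1) * γ) ∣ z ∧ 2 ^ (j * γ) ∣ u ∧
    z < u + 2 ^ ((j + 1) * γ) ∧ u < z + 2 ^ ((j + 1) * γ)

def DyadicAdj (h k x y : ℕ) : Prop :=
  x ≠ y ∧ ∃ c ≤ k, ChainEdge (h ^ c) x y ∨ ChainEdge (h ^ c) y x

namespace ChainEdge

variable {γ z u : ℕ}

lemma pow_dvd_of_between {ℓ w : ℕ} (he : ChainEdge γ z u) (hw : 2 ^ ℓ ∣ w)
    (hlo : min z u < w) (hhi : w < max z u) : 2 ^ ℓ ∣ z := by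
  obtain ⟨j, hz, -, hzu, huz⟩ := he
  rcases le_total ℓ ((j + 1) * γ) with hℓ | hℓ
  · exact (pow_dvd_pow 2 hℓ).trans hz
  · have hw' := (pow_dvd_pow 2 hℓ).trans hw
    rcases lt_or_gt_of_ne (show z ≠ w by omega) with hzw | hwz
    · have := Nat.add_le_of_dvd_of_lt hz hw' hzw; omega
    · have := Nat.add_le_of_dvd_of_lt hw' hz hwz; omega

lemma lt_add_pow_of_not_dvd {ℓ : ℕ} (he : ChainEdge γ z u) (hγ : γ ∣ ℓ)
    (hz : ¬ 2 ^ ℓ ∣ z ∨ ¬ 2 ^ ℓ ∣ u) : z < u + 2 ^ ℓ ∧ u < z + 2 ^ ℓ := by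
  obtain ⟨j, hjz, hju, hzu, huz⟩ := he
  obtain ⟨l, rfl⟩ := hγ
  have hjl : j < l := by
    by_contra! hlj
    have hu : 2 ^ (γ * l) ∣ u := (pow_dvd_pow 2 (by nlinarith)).trans hju
    have hz : 2 ^ (γ * l) ∣ z := (pow_dvd_pow 2 (by nlinarith)).trans hjz
    tauto
  have : 2 ^ ((j + 1) * γ) ≤ 2 ^ (γ * l) := Nat.pow_le_pow_right (by norm_num) (by nlinarith)
  omega

lemma pow_le (he : ChainEdge γ z u) (hz : 0 < z) : 2 ^ γ ≤ z := by
  obtain ⟨j, hjz, -⟩ := he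
  exact Nat.le_of_dvd hz ((pow_dvd_pow 2 (by nlinarith)).trans hjz)

lemma add_iff {L w p q : ℕ} (hw : 2 ^ L ∣ w) (hp : 0 < p) (hpL : p < 2 ^ L) :
    ChainEdge γ (w + p) (w + q) ↔ ChainEdge γ p q := by
  constructor
  · rintro ⟨j, hz, hu, hzu, huz⟩
    have hjL : (j + 1) * γ ≤ L := by
      by_contra! hL
      have := (Nat.dvd_add_right hw).mp ((pow_dvd_pow 2 hL.le).trans hz)
      have := Nat.le_of_dvd hp this
      omega
    have hw₁ := (pow_dvd_pow 2 hjL).trans hw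
    have hw₀ := (pow_dvd_pow 2 (by nlinarith : j * γ ≤ L)).trans hw
    exact ⟨j, (Nat.dvd_add_right hw₁).mp hz, (Nat.dvd_add_right hw₀).mp hu, by omega, by omega⟩
  · rintro ⟨j, hz, hu, hzu, huz⟩
    have hjL : (j + 1) * γ ≤ L :=
      (Nat.pow_le_pow_iff_right (by norm_num)).mp ((Nat.le_of_dvd hp hz).trans hpL.le)
    have hw₁ := (pow_dvd_pow 2 hjL).trans hw
    have hw₀ := (pow_dvd_pow 2 (by nlinarith : j * γ ≤ L)).trans hw
    exact ⟨j, dvd_add hw₁ hz, dvd_add hw₀ hu, by omega, by omega⟩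

lemma mul_pow_iff {l p q : ℕ} (hpq : p ≠ q) :
    ChainEdge γ (p * 2 ^ (l * γ)) (q * 2 ^ (l * γ)) ↔ ChainEdge γ p q := by
  set E := 2 ^ (l * γ) with hE
  have hE0 : 0 < E := by positivity
  have hsplit : ∀ i, 2 ^ ((l + i) * γ) = 2 ^ (i * γ) * E := fun i => by rw [hE, ← pow_add]; ring_nf
  have hdvd : ∀ i x, 2 ^ ((l + i) * γ) ∣ x * E ↔ 2 ^ (i * γ) ∣ x := fun i x => by
    rw [hsplit, Nat.mul_dvd_mul_iff_right hE0]
  have hlt : ∀ i x y, x * E < y * E + 2 ^ ((l + i) * γ) ↔ x < y + 2 ^ (i * γ) := fun i x y => by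
    rw [hsplit, ← add_mul, Nat.mul_lt_mul_right hE0]
  constructor
  · rintro ⟨j, hz, hu, hzu, huz⟩
    have hlj : l ≤ j := by
      by_contra! hjl
      have : 2 ^ ((j + 1) * γ) ≤ E := Nat.pow_le_pow_right (by norm_num) (by nlinarith)
      rcases lt_or_gt_of_ne hpq with h | h
      · have := Nat.mul_le_mul_right E (show p + 1 ≤ q from h); rw [add_mul] at this; omega
      · have := Nat.mul_le_mul_right E (show q + 1 ≤ p from h); rw [add_mul] at this; omega
    obtain ⟨i, rfl⟩ := Nat.exists_eq_add_of_le hlj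
    rw [show l + i + 1 = l + (i + 1) by ring] at hz hzu huz
    exact ⟨i, (hdvd _ _).mp hz, (hdvd _ _).mp hu, (hlt _ _ _).mp hzu, (hlt _ _ _).mp huz⟩
  · rintro ⟨i, hz, hu, hzu, huz⟩
    refine ⟨l + i, ?_, (hdvd _ _).mpr hu, ?_, ?_⟩ <;>
      rw [show l + i + 1 = l + (i + 1) by ring]
    exacts [(hdvd _ _).mpr hz, (hlt _ _ _).mpr hzu, (hlt _ _ _).mpr huz]

lemma exists_dvd_eq_add_pow (he : ChainEdge 1 z u) (hzu : z ≠ u) :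
    ∃ t, 2 ^ t ∣ min z u ∧ max z u = min z u + 2 ^ t := by
  obtain ⟨j, hz, hu, hzu', huz⟩ := he
  simp only [mul_one] at *
  have hz' : 2 ^ j ∣ z := (pow_dvd_pow 2 j.le_succ).trans hz
  have h2 : 2 ^ (j + 1) = 2 ^ j + 2 ^ j := by rw [pow_succ]; ring
  refine ⟨j, ?_, ?_⟩
  · rcases le_total z u with h | h
    · rwa [min_eq_left h]
    · rwa [min_eq_right h]
  · obtain ⟨a, ha⟩ : 2 ^ j ∣ max z u - min z u := by
      rcases le_total z u with h | h
      · rw [max_eq_right h, min_eq_left h]; exact Nat.dvd_sub hu hz'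
      · rw [max_eq_left h, min_eq_right h]; exact Nat.dvd_sub hz' hu
    have ha1 : a ≠ 0 := by rintro rfl; omega
    have ha2 : a < 2 := Nat.lt_of_mul_lt_mul_left (a := 2 ^ j) (by omega)
    obtain rfl : a = 1 := by omega
    omega

variable {a b c d : ℕ}

lemma not_cross (hab : ChainEdge γ a b) (hcd : ChainEdge γ c d) (hac : a < c) (hcb : c < b)
    (hbd : b < d) : False := by
  obtain ⟨j, ha, hb, -, hba⟩ := hab
  obtain ⟨j', hc, hd, -, hdc⟩ := hcd
  rcases le_or_gt j j' with hjj' | hjj'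
  · have := Nat.add_le_of_dvd_of_lt ha
      ((pow_dvd_pow 2 (Nat.mul_le_mul_right γ (by omega))).trans hc) hac
    omega
  · have := Nat.add_le_of_dvd_of_lt hc
      ((pow_dvd_pow 2 (Nat.mul_le_mul_right γ (by omega))).trans hb) hcb
    omega

lemma not_cross_symm (hba : ChainEdge γ b a) (hdc : ChainEdge γ d c) (hac : a < c) (hcb : c < b)
    (hbd : b < d) : False := by
  obtain ⟨j, hb, ha, hab, -⟩ := hba
  obtain ⟨j', hd, hc, hcd, -⟩ := hdc
  rcases le_or_gt j' j with hjj' | hjj'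
  · have := Nat.add_le_of_dvd_of_lt
      ((pow_dvd_pow 2 (Nat.mul_le_mul_right γ (by omega))).trans hb) hd hbd
    omega
  · have := Nat.add_le_of_dvd_of_lt
      ((pow_dvd_pow 2 (Nat.mul_le_mul_right γ (by omega))).trans hc) hb hcb
    omega

end ChainEdge

lemma not_cross_of_dyadic {a b c d t t' : ℕ} (ha : 2 ^ t ∣ a) (hb : b = a + 2 ^ t)
    (hc : 2 ^ t' ∣ c) (hd : d = c + 2 ^ t') (hac : a < c) (hcb : c < b) (hbd : b < d) : False := by
  rcases le_or_gt t t' with htt' | htt'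
  · have := Nat.add_le_of_dvd_of_lt ha ((pow_dvd_pow 2 htt').trans hc) hac
    omega
  · have hb' : 2 ^ t' ∣ b := hb ▸ dvd_add ((pow_dvd_pow 2 htt'.le).trans ha) (pow_dvd_pow 2 htt'.le)
    have := Nat.add_le_of_dvd_of_lt hc hb' hcb
    omega

namespace DyadicAdj
variable {h k x y : ℕ}

lemma symm (hxy : DyadicAdj h k x y) : DyadicAdj h k y x := by
  obtain ⟨hne, c, hc, he⟩ := hxy
  exact ⟨hne.symm, c, hc, he.symm⟩

lemma mul_pow_succ (h k Q L : ℕ) : DyadicAdj h k (Q * 2 ^ L) ((Q + 1) * 2 ^ L) := by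
  refine ⟨(Nat.mul_lt_mul_right (by positivity)).mpr (lt_add_one Q) |>.ne, 0, Nat.zero_le k, ?_⟩
  have h2 : 2 ^ (L + 1) = 2 ^ L + 2 ^ L := by rw [pow_succ]; ring
  have hL : 0 < 2 ^ L := by positivity
  rw [pow_zero]
  rcases Nat.even_or_odd Q with ⟨t, rfl⟩ | ⟨t, rfl⟩
  · left
    refine ⟨L, ?_, ?_, ?_, ?_⟩ <;> simp only [mul_one]
    · exact ⟨t, by rw [pow_succ]; ring⟩
    · exact dvd_mul_left _ _
    all_goals nlinarith
  · right
    refine ⟨L, ?_, ?_, ?_, ?_⟩ <;> simp only [mul_one]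
    · exact ⟨t + 1, by rw [pow_succ]; ring⟩
    · exact dvd_mul_left _ _
    all_goals nlinarith

lemma pow_dvd_of_between {ℓ w : ℕ} (hxy : DyadicAdj h k x y) (hw : 2 ^ ℓ ∣ w)
    (hlo : min x y < w) (hhi : w < max x y) : 2 ^ ℓ ∣ x ∨ 2 ^ ℓ ∣ y := by
  obtain ⟨-, c, -, he | he⟩ := hxy
  · exact Or.inl (he.pow_dvd_of_between hw hlo hhi)
  · exact Or.inr (he.pow_dvd_of_between hw (by rwa [min_comm]) (by rwa [max_comm]))

lemma div_eq_of_not_dvd {ℓ : ℕ} (hxy : DyadicAdj h k x y) (hx : ¬ 2 ^ ℓ ∣ x)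
    (hy : ¬ 2 ^ ℓ ∣ y) : x / 2 ^ ℓ = y / 2 ^ ℓ := by
  wlog hle : x ≤ y generalizing x y
  · exact (this hxy.symm hy hx (by omega)).symm
  by_contra hne
  have hlt : x / 2 ^ ℓ < y / 2 ^ ℓ := lt_of_le_of_ne (Nat.div_le_div_right hle) hne
  have hxw : x < y / 2 ^ ℓ * 2 ^ ℓ := Nat.lt_mul_of_div_lt hlt (by positivity)
  have hwy : y / 2 ^ ℓ * 2 ^ ℓ < y :=
    lt_of_le_of_ne (Nat.div_mul_le_self y _) fun h => hy (h ▸ dvd_mul_left _ _)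
  rcases hxy.pow_dvd_of_between (dvd_mul_left (2 ^ ℓ) (y / 2 ^ ℓ)) (by omega) (by omega)
    with h | h <;> contradiction

lemma lt_add_pow_of_not_dvd {ℓ : ℕ} (hxy : DyadicAdj h k x y) (hℓ : h ^ k ∣ ℓ)
    (hy : ¬ 2 ^ ℓ ∣ y) : x < y + 2 ^ ℓ ∧ y < x + 2 ^ ℓ := by
  obtain ⟨-, c, hc, he | he⟩ := hxy
  · exact he.lt_add_pow_of_not_dvd ((pow_dvd_pow h hc).trans hℓ) (Or.inr hy)
  · exact (he.lt_add_pow_of_not_dvd ((pow_dvd_pow h hc).trans hℓ) (Or.inl hy)).symm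

lemma eq_of_dvd_of_not_dvd {z ℓ : ℕ} (hzx : DyadicAdj h k z x) (hℓ : h ^ k ∣ ℓ)
    (hz : 2 ^ ℓ ∣ z) (hx : ¬ 2 ^ ℓ ∣ x) :
    z = x / 2 ^ ℓ * 2 ^ ℓ ∨ z = (x / 2 ^ ℓ + 1) * 2 ^ ℓ := by
  have hdist := hzx.lt_add_pow_of_not_dvd hℓ hx
  set E := 2 ^ ℓ
  have hE : 0 < E := by positivity
  obtain ⟨a, rfl⟩ := hz
  have hx' := Nat.div_add_mod x E
  have hr : x % E ≠ 0 := fun h => hx (Nat.dvd_of_mod_eq_zero h)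
  have hrE := Nat.mod_lt x hE
  have h1 : a < x / E + 2 := Nat.lt_of_mul_lt_mul_left (a := E) (by rw [mul_add]; omega)
  have h2 : x / E < a + 1 := Nat.lt_of_mul_lt_mul_left (a := E) (by rw [mul_add]; omega)
  rcases (by omega : a = x / E ∨ a = x / E + 1) with rfl | rfl
  · exact Or.inl (mul_comm _ _)
  · exact Or.inr (mul_comm _ _)

lemma mul_pow_iff {L p q : ℕ} (hL : h ^ k ∣ L) :
    DyadicAdj h k (p * 2 ^ L) (q * 2 ^ L) ↔ DyadicAdj h k p q := by
  have hne : p * 2 ^ L ≠ q * 2 ^ L ↔ p ≠ q := (Nat.mul_left_inj (by positivity)).not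
  unfold DyadicAdj
  rw [hne]
  refine and_congr_right fun hpq => exists_congr fun c => and_congr_right fun hc => ?_
  obtain ⟨l, hl⟩ := (pow_dvd_pow h hc).trans hL
  rw [hl, mul_comm (h ^ c)]
  exact or_congr (ChainEdge.mul_pow_iff hpq) (ChainEdge.mul_pow_iff hpq.symm)

lemma add_iff {L w p q : ℕ} (hw : 2 ^ L ∣ w) (hp : 0 < p) (hpL : p < 2 ^ L) (hq : 0 < q)
    (hqL : q < 2 ^ L) : DyadicAdj h k (w + p) (w + q) ↔ DyadicAdj h k p q := by
  unfold DyadicAdj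
  rw [Ne, add_right_inj]
  refine and_congr_right fun _ => exists_congr fun c => and_congr_right fun _ => ?_
  exact or_congr (ChainEdge.add_iff hw hp hpL) (ChainEdge.add_iff hw hq hqL)

lemma succ_iff (hx : 0 < x) (hy : 0 < y) (hxH : x < 2 ^ h ^ (k + 1)) (hyH : y < 2 ^ h ^ (k + 1)) :
    DyadicAdj h (k + 1) x y ↔ DyadicAdj h k x y := by
  refine ⟨fun ⟨hne, c, hc, he⟩ => ⟨hne, c, ?_, he⟩, fun ⟨hne, c, hc, he⟩ => ⟨hne, c, by omega, he⟩⟩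
  by_contra! hkc
  obtain rfl : c = k + 1 := by omega
  rcases he with he | he
  · exact absurd (he.pow_le hx) (by omega)
  · exact absurd (he.pow_le hy) (by omega)

end DyadicAdj

/-- `none` holds the scale-0 edges; `some (c, true)` and `some (c, false)` hold the scale `c + 1`
edges whose more divisible endpoint is the left, resp. the right, end. -/
def EdgeClass (h : ℕ) {k : ℕ} : Option (Fin k × Bool) → ℕ → ℕ → Prop
  | none, x, y => ∃ t, 2 ^ t ∣ x ∧ y = x + 2 ^ t
  | some (c, true), x, y => ChainEdge (h ^ (c.1 + 1)) x y
  | some (c, false), x, y => ChainEdge (h ^ (c.1 + 1)) y x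

lemma EdgeClass.not_cross {h k a b c d : ℕ} {i : Option (Fin k × Bool)} (hab : EdgeClass h i a b)
    (hcd : EdgeClass h i c d) (hac : a < c) (hcb : c < b) (hbd : b < d) : False := by
  rcases i with _ | ⟨_, _ | _⟩
  · obtain ⟨t, ha, hb⟩ := hab
    obtain ⟨t', hc, hd⟩ := hcd
    exact not_cross_of_dyadic ha hb hc hd hac hcb hbd
  · exact ChainEdge.not_cross_symm hab hcd hac hcb hbd
  · exact ChainEdge.not_cross hab hcd hac hcb hbd

lemma DyadicAdj.exists_edgeClass {h k x y : ℕ} (hxy : DyadicAdj h k x y) (hlt : x < y) :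
    ∃ i : Option (Fin k × Bool), EdgeClass h i x y := by
  obtain ⟨hne, c, hc, he⟩ := hxy
  rcases c with _ | c
  · refine ⟨none, show ∃ t, 2 ^ t ∣ x ∧ y = x + 2 ^ t from ?_⟩
    rw [pow_zero] at he
    rcases he with he | he
    · simpa [min_eq_left hlt.le, max_eq_right hlt.le] using he.exists_dvd_eq_add_pow hne
    · simpa [min_eq_right hlt.le, max_eq_left hlt.le] using he.exists_dvd_eq_add_pow hne.symm
  · rcases he with he | he
    · exact ⟨some (⟨c, by omega⟩, true), he⟩
    · exact ⟨some (⟨c, by omega⟩, false), he⟩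

theorem kNonCrossing_of_coloring {n : ℕ} {ι : Type*} [Fintype ι] (G : SimpleGraph (Fin n))
    (col : Fin n → Fin n → ι)
    (hcol : ∀ a b c d, a < c → c < b → b < d → G.Adj a b → G.Adj c d → col a b ≠ col c d) :
    KNonCrossing G (Fintype.card ι) := by
  set e := Fintype.equivFin ι
  have hrep : ∀ {a b a' b' : Fin n}, s(a, b) = s(a', b') → a < b → a' < b' → a = a' ∧ b = b' := by
    intro a b a' b' h hab hab'
    rcases Sym2.eq_iff.mp h with h | ⟨rfl, rfl⟩
    · exact h
    · exact absurd (hab.trans hab') (lt_irrefl _)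
  refine ⟨fun i => {x | x ∈ G.edgeSet ∧ ∃ a b, a < b ∧ x = s(a, b) ∧ e (col a b) = i},
    ?_, ?_, ?_⟩
  · ext x
    simp only [Set.mem_iUnion]
    refine ⟨fun ⟨_, hx, _⟩ => hx, fun hx => ?_⟩
    induction x using Sym2.ind with
    | _ a b =>
      rcases lt_trichotomy a b with hab | rfl | hab
      · exact ⟨_, hx, a, b, hab, rfl, rfl⟩
      · exact (G.irrefl (G.mem_edgeSet.mp hx)).elim
      · exact ⟨_, hx, b, a, hab, Sym2.eq_swap, rfl⟩
  · intro i j hij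
    rw [Set.disjoint_left]
    rintro x ⟨-, a, b, hab, rfl, rfl⟩ ⟨-, a', b', hab', hx, rfl⟩
    obtain ⟨rfl, rfl⟩ := hrep hx hab hab'
    exact hij rfl
  · rintro i ⟨a, b, c, d, hac, hcb, hbd, ⟨hab, a', b', hab', hx, rfl⟩, ⟨hcd, c', d', hcd', hy, hi⟩⟩
    obtain ⟨rfl, rfl⟩ := hrep hx (hac.trans hcb) hab'
    obtain ⟨rfl, rfl⟩ := hrep hy (hcb.trans hbd) hcd'
    exact hcol _ _ _ _ hac hcb hbd (G.mem_edgeSet.mp hab) (G.mem_edgeSet.mp hcd)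
      (e.injective hi.symm)

def dyadicGraph (h k n : ℕ) : SimpleGraph (Fin n) where
  Adj a b := DyadicAdj h k a b
  symm := ⟨fun _ _ => DyadicAdj.symm⟩
  loopless := ⟨fun _ ha => ha.1 rfl⟩

@[simp]
lemma dyadicGraph_adj {h k n : ℕ} {a b : Fin n} :
    (dyadicGraph h k n).Adj a b ↔ DyadicAdj h k a b := Iff.rfl

lemma orderedAlongHamPath_dyadicGraph (h k n : ℕ) : OrderedAlongHamPath (dyadicGraph h k n) :=
  fun i _ => by simpa using DyadicAdj.mul_pow_succ h k i 0

lemma kNonCrossing_dyadicGraph (h k n : ℕ) : KNonCrossing (dyadicGraph h k n) (2 * k + 1) := by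
  have hcard : Fintype.card (Option (Fin k × Bool)) = 2 * k + 1 := by simp [mul_comm]
  rw [← hcard]
  refine kNonCrossing_of_coloring _ (fun a b => Classical.epsilon fun i => EdgeClass h i a b)
    fun a b c d hac hcb hbd hab hcd heq => ?_
  have hab' := Classical.epsilon_spec ((dyadicGraph_adj.mp hab).exists_edgeClass (hac.trans hcb))
  have hcd' := Classical.epsilon_spec ((dyadicGraph_adj.mp hcd).exists_edgeClass (hcb.trans hbd))
  rw [heq] at hab'
  exact hab'.not_cross hcd' hac hcb hbd

def IsInducedPathIn (R : ℕ → ℕ → Prop) (s : ℕ) (V : ℕ → ℕ) : Prop :=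
  (∀ i < s, ∀ j < s, R (V i) (V j) ↔ i + 1 = j ∨ j + 1 = i) ∧
    ∀ i < s, ∀ j < s, V i = V j → i = j

def InducedPathSizeLE (R : ℕ → ℕ → Prop) (H b : ℕ) : Prop :=
  ∀ s V, IsInducedPathIn R s V → (∀ i < s, 0 < V i ∧ V i < 2 ^ H) → s ≤ b

namespace IsInducedPathIn
variable {R : ℕ → ℕ → Prop} {s : ℕ} {V : ℕ → ℕ}

lemma adj_succ (hP : IsInducedPathIn R s V) {i : ℕ} (hi : i + 1 < s) : R (V i) (V (i + 1)) :=
  (hP.1 i (by omega) (i + 1) hi).mpr (Or.inl rfl)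

lemma not_adj (hP : IsInducedPathIn R s V) {i j : ℕ} (hij : i + 1 < j) (hj : j < s) :
    ¬ R (V i) (V j) := fun h => by
  have := (hP.1 i (by omega) j hj).mp h
  omega

lemma of_iff {R' : ℕ → ℕ → Prop} {W : ℕ → ℕ} (hP : IsInducedPathIn R s V)
    (hR : ∀ i < s, ∀ j < s, R' (W i) (W j) ↔ R (V i) (V j))
    (hW : ∀ i < s, ∀ j < s, W i = W j → V i = V j) : IsInducedPathIn R' s W :=
  ⟨fun i hi j hj => (hR i hi j hj).trans (hP.1 i hi j hj),
    fun i hi j hj h => hP.2 i hi j hj (hW i hi j hj h)⟩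

lemma shift (hP : IsInducedPathIn R s V) {a t : ℕ} (hat : a + t ≤ s) :
    IsInducedPathIn R t (fun i => V (a + i)) := by
  refine ⟨fun i hi j hj => ?_, fun i hi j hj h => ?_⟩
  · rw [hP.1 (a + i) (by omega) (a + j) (by omega)]
    omega
  · have := hP.2 _ (by omega) _ (by omega) h
    omega

lemma take (hP : IsInducedPathIn R s V) {t : ℕ} (ht : t ≤ s) : IsInducedPathIn R t V := by
  simpa using hP.shift (a := 0) (by omega)

lemma reverse (hP : IsInducedPathIn R s V) : IsInducedPathIn R s (fun i => V (s - 1 - i)) := by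
  refine ⟨fun i hi j hj => ?_, fun i hi j hj h => ?_⟩
  · rw [hP.1 (s - 1 - i) (by omega) (s - 1 - j) (by omega)]
    omega
  · have := hP.2 _ (by omega) _ (by omega) h
    omega

lemma size_le_two_mul_add_one {H b : ℕ} (hb : InducedPathSizeLE R H b)
    (hP : IsInducedPathIn R s V) (hV : ∀ i < s, V i < 2 ^ H) : s ≤ 2 * b + 1 := by
  by_cases h0 : ∃ i₀ < s, V i₀ = 0
  · obtain ⟨i₀, hi₀, hVi₀⟩ := h0
    have hpos : ∀ i < s, i ≠ i₀ → 0 < V i := fun i hi hne =>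
      Nat.pos_of_ne_zero fun h => hne (hP.2 i hi i₀ hi₀ (h.trans hVi₀.symm))
    have hpre := hb i₀ V (hP.take hi₀.le) fun i hi =>
      ⟨hpos i (by omega) (by omega), hV i (by omega)⟩
    have hsuf := hb (s - (i₀ + 1)) _ (hP.shift (a := i₀ + 1) (by omega)) fun i hi =>
      ⟨hpos _ (by omega) (by omega), hV _ (by omega)⟩
    omega
  · push Not at h0
    have := hb s V hP fun i hi => ⟨Nat.pos_of_ne_zero (h0 i hi), hV i hi⟩
    omega

end IsInducedPathIn

namespace InducedPathSizeLE
variable {R : ℕ → ℕ → Prop} {H b : ℕ}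

lemma one (R : ℕ → ℕ → Prop) : InducedPathSizeLE R 1 1 := by
  intro s V hP hV
  by_contra! hs
  have := hP.2 0 (by omega) 1 hs (by have := hV 0 (by omega); have := hV 1 hs; omega)
  omega

lemma mono {b' : ℕ} (hb : InducedPathSizeLE R H b) (hbb' : b ≤ b') : InducedPathSizeLE R H b' :=
  fun s V hP hV => (hb s V hP hV).trans hbb'

lemma of_iff {R' : ℕ → ℕ → Prop} (hb : InducedPathSizeLE R H b)
    (hR : ∀ x y, 0 < x → x < 2 ^ H → 0 < y → y < 2 ^ H → (R' x y ↔ R x y)) :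
    InducedPathSizeLE R' H b := fun s V hP hV =>
  hb s V (hP.of_iff (fun i hi j hj => (hR _ _ (hV i hi).1 (hV i hi).2 (hV j hj).1 (hV j hj).2).symm)
    fun _ _ _ _ h => h) hV

end InducedPathSizeLE

namespace IsInducedPathIn
variable {h c s : ℕ} {V : ℕ → ℕ}

lemma div_eq_of_forall_not_dvd {ℓ : ℕ} (hP : IsInducedPathIn (DyadicAdj h c) s V)
    (hV : ∀ i < s, ¬ 2 ^ ℓ ∣ V i) : ∀ i < s, V i / 2 ^ ℓ = V 0 / 2 ^ ℓ := by
  intro i hi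
  induction i with
  | zero => rfl
  | succ i ih =>
    rw [← ih (by omega)]
    exact ((hP.adj_succ hi).div_eq_of_not_dvd (hV i (by omega)) (hV _ hi)).symm

lemma size_le_of_forall_not_dvd {L b : ℕ} (hb : InducedPathSizeLE (DyadicAdj h c) L b)
    (hP : IsInducedPathIn (DyadicAdj h c) s V) (hV : ∀ i < s, ¬ 2 ^ L ∣ V i) : s ≤ b := by
  set w := V 0 / 2 ^ L * 2 ^ L
  have hsplit : ∀ i < s, w + V i % 2 ^ L = V i := fun i hi => by
    rw [show w = V i / 2 ^ L * 2 ^ L by rw [hP.div_eq_of_forall_not_dvd hV i hi], Nat.div_add_mod']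
  have hrange : ∀ i < s, 0 < V i % 2 ^ L ∧ V i % 2 ^ L < 2 ^ L := fun i hi =>
    ⟨Nat.pos_of_ne_zero fun h => hV i hi (Nat.dvd_of_mod_eq_zero h), Nat.mod_lt _ (by positivity)⟩
  refine hb s (fun i => V i % 2 ^ L) (hP.of_iff (fun i hi j hj => ?_) fun i hi j hj h => ?_) hrange
  · rw [← DyadicAdj.add_iff (dvd_mul_left _ _) (hrange i hi).1 (hrange i hi).2 (hrange j hj).1
      (hrange j hj).2, hsplit i hi, hsplit j hj]
  · rw [← hsplit i hi, ← hsplit j hj]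
    exact congrArg (w + ·) h

lemma size_le_of_forall_dvd {m b : ℕ} (hb : InducedPathSizeLE (DyadicAdj h c) (h ^ c) b)
    (hP : IsInducedPathIn (DyadicAdj h c) s V) (hdvd : ∀ i < s, 2 ^ (m * h ^ c) ∣ V i)
    (hV : ∀ i < s, 0 < V i ∧ V i < 2 ^ ((m + 1) * h ^ c)) : s ≤ b := by
  set E := 2 ^ (m * h ^ c)
  have hE : 0 < E := by positivity
  have hmul : ∀ i < s, V i / E * E = V i := fun i hi => Nat.div_mul_cancel (hdvd i hi)
  refine hb s (fun i => V i / E) (hP.of_iff (fun i hi j hj => ?_) fun i hi j hj h => ?_)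
    fun i hi => ⟨Nat.div_pos (Nat.le_of_dvd (hV i hi).1 (hdvd i hi)) hE, ?_⟩
  · rw [← DyadicAdj.mul_pow_iff (dvd_mul_left _ m), hmul i hi, hmul j hj]
  · rw [← hmul i hi, ← hmul j hj]
    exact congrArg (· * E) h
  · rw [Nat.div_lt_iff_lt_mul hE, ← pow_add]
    convert (hV i hi).2 using 2
    ring

lemma succ_eq_of_pow_dvd {j r : ℕ} (hP : IsInducedPathIn (DyadicAdj h c) (r + 1) V)
    (hr : 2 ^ ((j + 1) * h ^ c) ∣ V r) (hpre : ∀ i < r, ¬ 2 ^ ((j + 1) * h ^ c) ∣ V i) :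
    ∀ i < r, 2 ^ (j * h ^ c) ∣ V i → i + 1 = r := by
  -- The vertices before `V r` lie in one block of length `2 ^ ((j + 1) * h ^ c)` with `V r` at
  -- one end, so `V r` is adjacent to each multiple of `2 ^ (j * h ^ c)` among them.
  intro i hi hdvd
  have hE : 0 < 2 ^ ((j + 1) * h ^ c) := by positivity
  have hblock := (hP.take r.le_succ).div_eq_of_forall_not_dvd hpre
  have hlast := (hP.adj_succ (i := r - 1) (by omega)).symm
  rw [show r - 1 + 1 = r by omega] at hlast
  have hVr := hlast.eq_of_dvd_of_not_dvd (dvd_mul_left _ _) hr (hpre _ (by omega))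
  rw [hblock (r - 1) (by omega), add_one_mul (V 0 / _)] at hVr
  have hVi := Nat.div_add_mod' (V i) (2 ^ ((j + 1) * h ^ c))
  rw [hblock i hi] at hVi
  have hmod : V i % 2 ^ ((j + 1) * h ^ c) ≠ 0 := fun h => hpre i hi (Nat.dvd_of_mod_eq_zero h)
  have hmodE := Nat.mod_lt (V i) hE
  have hadj : DyadicAdj h c (V r) (V i) :=
    ⟨by omega, c, le_rfl, Or.inl ⟨j, hr, hdvd, by omega, by omega⟩⟩
  by_contra hne
  exact hP.not_adj (by omega) (by omega) hadj.symm

lemma le_of_pow_dvd {j r : ℕ} (hP : IsInducedPathIn (DyadicAdj h c) (r + 1) V)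
    (hr : 2 ^ (j * h ^ c) ∣ V r) (hpre : ∀ i < r, ¬ 2 ^ (j * h ^ c) ∣ V i) : r ≤ j := by
  induction j generalizing r with
  | zero =>
    by_contra! h0
    exact hpre 0 (by omega) (by simp)
  | succ j ih =>
    have hlast := hP.succ_eq_of_pow_dvd hr hpre
    by_cases hprev : 0 < r ∧ 2 ^ (j * h ^ c) ∣ V (r - 1)
    · have := ih (r := r - 1) (hP.take (by omega)) hprev.2 fun i hi hdvd => by
        have := hlast i (by omega) hdvd
        omega
      omega
    · have hr' := (pow_dvd_pow 2 (Nat.mul_le_mul_right _ j.le_succ)).trans hr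
      refine (ih hP hr' fun i hi hdvd => ?_).trans j.le_succ
      have := hlast i hi hdvd
      exact hprev ⟨by omega, by rwa [show r - 1 = i by omega]⟩

lemma not_pow_dvd_of_forall_between {L i j : ℕ} (hP : IsInducedPathIn (DyadicAdj h c) s V)
    (hL : h ^ c ∣ L) (hij : i + 1 < j) (hj : j < s) (hi : 2 ^ L ∣ V i)
    (hbetween : ∀ t, i < t → t < j → ¬ 2 ^ L ∣ V t) : ¬ 2 ^ L ∣ V j := by
  -- `V i` and `V j` would be the two ends of the block holding the vertices between them.
  intro hVj
  have hblock := (hP.shift (a := i + 1) (t := j - (i + 1)) (by omega)).div_eq_of_forall_not_dvd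
    fun t ht => hbetween _ (by omega) (by omega)
  have hQ : V (j - 1) / 2 ^ L = V (i + 1) / 2 ^ L := by
    simpa [show i + 1 + (j - 1 - (i + 1)) = j - 1 by omega]
      using hblock (j - 1 - (i + 1)) (by omega)
  have hVi := (hP.adj_succ (i := i) (by omega)).eq_of_dvd_of_not_dvd hL hi
    (hbetween _ (by omega) (by omega))
  have hlast := hP.adj_succ (i := j - 1) (by omega)
  rw [show j - 1 + 1 = j by omega] at hlast
  have hVj' := hlast.symm.eq_of_dvd_of_not_dvd hL hVj (hbetween _ (by omega) (by omega))
  rw [hQ] at hVj'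
  have hne : V i ≠ V j := fun h => by
    have := hP.2 i (by omega) j hj h
    omega
  refine hP.not_adj hij hj ?_
  rcases hVi with hVi | hVi <;> rcases hVj' with hVj' | hVj' <;> rw [hVi, hVj'] at hne ⊢
  · exact absurd rfl hne
  · exact DyadicAdj.mul_pow_succ _ _ _ _
  · exact (DyadicAdj.mul_pow_succ _ _ _ _).symm
  · exact absurd rfl hne

lemma pow_dvd_of_le_of_le {L i k : ℕ} (hP : IsInducedPathIn (DyadicAdj h c) s V)
    (hL : h ^ c ∣ L) (hk : k < s) (hi : 2 ^ L ∣ V i) (hVk : 2 ^ L ∣ V k) :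
    ∀ t, i ≤ t → t ≤ k → 2 ^ L ∣ V t := by
  intro t hit htk
  induction t, hit using Nat.le_induction with
  | base => exact hi
  | succ t hit ih =>
    by_contra hnot
    have hex : ∃ b, t + 1 < b ∧ b ≤ k ∧ 2 ^ L ∣ V b :=
      ⟨k, lt_of_le_of_ne htk fun h => hnot (h ▸ hVk), le_rfl, hVk⟩
    obtain ⟨hb1, hb2, hb3⟩ := Nat.find_spec hex
    refine hP.not_pow_dvd_of_forall_between hL (by omega) (by omega) (ih (by omega))
      (fun u hu1 hu2 hu => ?_) hb3
    rcases (by omega : u = t + 1 ∨ t + 1 < u) with rfl | hlt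
    · exact hnot hu
    · exact Nat.find_min hex hu2 ⟨hlt, by omega, hu⟩

lemma size_le_of_exists_pow_dvd {m b : ℕ} (hb : InducedPathSizeLE (DyadicAdj h c) (h ^ c) b)
    (hP : IsInducedPathIn (DyadicAdj h c) s V)
    (hV : ∀ i < s, 0 < V i ∧ V i < 2 ^ ((m + 1) * h ^ c))
    (hex : ∃ i < s, 2 ^ (m * h ^ c) ∣ V i) : s ≤ b + 2 * m := by
  classical
  have hL : h ^ c ∣ m * h ^ c := dvd_mul_left _ _
  obtain ⟨hi₁s, hi₁⟩ := Nat.find_spec hex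
  set i₁ := Nat.find hex
  set i₂ := Nat.findGreatest (fun i => 2 ^ (m * h ^ c) ∣ V i) (s - 1)
  have hi₂ : 2 ^ (m * h ^ c) ∣ V i₂ :=
    Nat.findGreatest_spec (P := fun i => 2 ^ (m * h ^ c) ∣ V i) (m := i₁) (by omega) hi₁
  have hi₁₂ : i₁ ≤ i₂ := Nat.le_findGreatest (n := s - 1) (by omega) hi₁
  have hi₂s : i₂ < s := by
    have := Nat.findGreatest_le (P := fun i => 2 ^ (m * h ^ c) ∣ V i) (s - 1)
    omega
  have hpre : i₁ ≤ m := (hP.take (by omega : i₁ + 1 ≤ s)).le_of_pow_dvd (r := i₁) hi₁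
    fun i hi hdvd => Nat.find_min hex hi ⟨by omega, hdvd⟩
  have hsuf : s - 1 - i₂ ≤ m := (hP.reverse.take (by omega : s - 1 - i₂ + 1 ≤ s)).le_of_pow_dvd
    (by rwa [show s - 1 - (s - 1 - i₂) = i₂ by omega])
    fun i hi => Nat.findGreatest_is_greatest (P := fun i => 2 ^ (m * h ^ c) ∣ V i)
      (k := s - 1 - i) (n := s - 1) (by omega) (by omega)
  have hmid : i₂ - i₁ + 1 ≤ b :=
    (hP.shift (a := i₁) (t := i₂ - i₁ + 1) (by omega)).size_le_of_forall_dvd hb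
    (fun t ht => hP.pow_dvd_of_le_of_le hL hi₂s hi₁ hi₂ _ (by omega) (by omega))
    fun t ht => hV _ (by omega)
  omega

end IsInducedPathIn

namespace InducedPathSizeLE
variable {h c b₁ : ℕ}

lemma succ_mul {m b : ℕ} (h₁ : InducedPathSizeLE (DyadicAdj h c) (h ^ c) b₁)
    (hm : InducedPathSizeLE (DyadicAdj h c) (m * h ^ c) b) :
    InducedPathSizeLE (DyadicAdj h c) ((m + 1) * h ^ c) (max b (b₁ + 2 * m)) := by
  intro s V hP hV
  by_cases hex : ∃ i < s, 2 ^ (m * h ^ c) ∣ V i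
  · exact (hP.size_le_of_exists_pow_dvd h₁ hV hex).trans (le_max_right _ _)
  · push Not at hex
    exact (hP.size_le_of_forall_not_dvd hm hex).trans (le_max_left _ _)

lemma add_one_mul (h₁ : InducedPathSizeLE (DyadicAdj h c) (h ^ c) b₁) :
    ∀ m, InducedPathSizeLE (DyadicAdj h c) ((m + 1) * h ^ c) (b₁ + 2 * m)
  | 0 => by simpa using h₁
  | m + 1 => (h₁.succ_mul (add_one_mul h₁ m)).mono (by omega)

lemma pow_succ (hh : 1 ≤ h) (h₁ : InducedPathSizeLE (DyadicAdj h c) (h ^ c) b₁) :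
    InducedPathSizeLE (DyadicAdj h c) (h ^ (c + 1)) (b₁ + 2 * (h - 1)) := by
  have := h₁.add_one_mul (h - 1)
  rwa [Nat.sub_add_cancel hh, ← pow_succ'] at this

end InducedPathSizeLE

theorem inducedPathSizeLE_dyadicAdj {h : ℕ} (hh : 1 ≤ h) :
    ∀ c, InducedPathSizeLE (DyadicAdj h c) (h ^ c) (2 * (h - 1) * c + 1)
  | 0 => by simpa using InducedPathSizeLE.one _
  | c + 1 => (((inducedPathSizeLE_dyadicAdj hh c).pow_succ hh).of_iff
      fun _ _ hx hxH hy hyH => DyadicAdj.succ_iff hx hy hxH hyH).mono (le_of_eq (by ring))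

lemma IsInducedPath.isInducedPathIn {n s : ℕ} {G : SimpleGraph (Fin n)} {R : ℕ → ℕ → Prop}
    (hR : ∀ a b : Fin n, G.Adj a b ↔ R a b) {w : Fin s → Fin n} (hw : IsInducedPath G w) :
    IsInducedPathIn R s fun i => if hi : i < s then w ⟨i, hi⟩ else 0 := by
  refine ⟨fun i hi j hj => ?_, fun i hi j hj h => ?_⟩
  · simp only [dif_pos hi, dif_pos hj, ← hR]
    exact hw.2 ⟨i, hi⟩ ⟨j, hj⟩
  · simp only [dif_pos hi, dif_pos hj] at h
    simpa using hw.1 (Fin.ext h)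

lemma size_le_of_isInducedPath_dyadicGraph {h k s : ℕ} (hh : 1 ≤ h)
    {w : Fin s → Fin (2 ^ h ^ (k + 1))} (hw : IsInducedPath (dyadicGraph h k _) w) :
    s ≤ 4 * (k + 1) * h := by
  have := (hw.isInducedPathIn fun _ _ => dyadicGraph_adj).size_le_two_mul_add_one
    ((inducedPathSizeLE_dyadicAdj hh k).pow_succ hh) fun i hi => by simp [dif_pos hi]
  obtain ⟨h', rfl⟩ := Nat.exists_eq_add_of_le' hh
  simp only [Nat.add_sub_cancel] at this
  nlinarith

lemma logb_two_pow_pow_rpow (h k : ℕ) :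
    Real.logb 2 ((2 ^ h ^ (k + 1) : ℕ) : ℝ) ^ ((1 : ℝ) / ((k : ℝ) + 1)) = h := by
  rw [Nat.cast_pow, Nat.cast_ofNat, Real.logb_pow, Real.logb_self_eq_one one_lt_two, mul_one,
    Nat.cast_pow, one_div, ← Nat.cast_succ]
  exact Real.pow_rpow_inv_natCast (Nat.cast_nonneg h) k.succ_ne_zero

/-- for every `k ≥ 0` there is `C > 0` such that for infinitely many `n`
there is an `n`-vertex ordered graph along a Hamiltonian path that is
`(2k+1)`-non-crossing and has no induced path of size greater than
`C * (log n)^(1/(k+1))` (logs base 2). -/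
theorem stmt13 (k : ℕ) :
    ∃ C : ℝ, 0 < C ∧ ∀ m : ℕ, ∃ n : ℕ, m ≤ n ∧
      ∃ G : SimpleGraph (Fin n),
        OrderedAlongHamPath G ∧ KNonCrossing G (2 * k + 1) ∧
        ∀ (s : ℕ) (w : Fin s → Fin n), IsInducedPath G w →
          (s : ℝ) ≤ C * (Real.logb 2 n) ^ ((1 : ℝ) / ((k : ℝ) + 1)) := by
  refine ⟨4 * (k + 1), by positivity, fun m => ⟨2 ^ (m + 1) ^ (k + 1), ?_,
    dyadicGraph (m + 1) k _, orderedAlongHamPath_dyadicGraph _ _ _, kNonCrossing_dyadicGraph _ _ _,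
    fun s w hw => ?_⟩⟩
  · calc m ≤ (m + 1) ^ (k + 1) := (Nat.le_succ m).trans (Nat.le_self_pow k.succ_ne_zero _)
      _ ≤ 2 ^ (m + 1) ^ (k + 1) := Nat.lt_two_pow_self.le
  · rw [logb_two_pow_pow_rpow]
    exact_mod_cast size_le_of_isInducedPath_dyadicGraph m.succ_pos hw
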